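/- The min-weight algorithm for δ-MINCUT achieves a δ-approximation: if C_ALG is the contact set disabled by the algorithm's solution and C* the contact set disabled by an optimal solution, then |Cover_δ(C_ALG)| ≤ δ·|Cover_δ(C*)|. -/

import Mathlib

/-- A time-varying graph: finite edge set, discrete time span `{1,...,T}`,
edge-presence function `ρ`. Unit edge-traversal delay is built into journeys. -/
structure TVG (V : Type) where
  E : Finset (V × V)
  T : ℕ
  ρ : V × V → ℕ → Bool

variable {V : Type}

/-- A contact: edge `e` is present at slot `t ∈ {1,...,T}`. -/
def TVG.Contact (G : TVG V) (e : V × V) (t : ℕ) : Prop :=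
  e ∈ G.E ∧ 1 ≤ t ∧ t ≤ G.T ∧ G.ρ e t = true

/-- A journey from `s` to `d`: a nonempty time-respecting sequence of contacts
(unit edge delay, strictly increasing slots, completed by slot `T`). -/
structure TVG.Journey (G : TVG V) (s d : V) where
  contacts : List ((V × V) × ℕ)
  ne : contacts ≠ []
  starts : (contacts.head ne).1.1 = s
  ends : (contacts.getLast ne).1.2 = d
  valid : ∀ c ∈ contacts, G.Contact c.1 c.2
  chain : List.Chain' (fun c₁ c₂ => c₁.1.2 = c₂.1.1 ∧ c₁.2 < c₂.2) contacts

/-- Journey `J` uses edge `e` at slot `t`. -/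
def TVG.Journey.uses {G : TVG V} {s d : V} (J : G.Journey s d) (e : V × V) (t : ℕ) : Prop :=
  (e, t) ∈ J.contacts

/-- Two journeys are `δ`-disjoint: they never use the same edge within `δ` slots. -/
def DeltaDisjoint {G : TVG V} {s d : V} (δ : ℕ) (J₁ J₂ : G.Journey s d) : Prop :=
  ∀ e t₁ t₂, J₁.uses e t₁ → J₂.uses e t₂ → δ ≤ Nat.dist t₁ t₂

/-- There exist `m` pairwise `δ`-disjoint journeys from `s` to `d`. -/
def HasDisjointJourneys (G : TVG V) (s d : V) (δ m : ℕ) : Prop :=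
  ∃ Js : Fin m → G.Journey s d, ∀ i j, i ≠ j → DeltaDisjoint δ (Js i) (Js j)

/-- A removal/failure of edge `e` during slots `[t₀, t₀ + dur - 1]` kills contact `c`. -/
def Kills (e : V × V) (t₀ dur : ℕ) (c : (V × V) × ℕ) : Prop :=
  c.1 = e ∧ t₀ ≤ c.2 ∧ c.2 < t₀ + dur

/-- `F` is a set of heads of `δ`-removals whose application leaves no `s`-`d` journey. -/
def IsCutSet (G : TVG V) (s d : V) (δ : ℕ) (F : Finset ((V × V) × ℕ)) : Prop :=
  ∀ J : G.Journey s d, ∃ c ∈ J.contacts, ∃ f ∈ F, Kills f.1 f.2 δ c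

/-- `MaxFlow_δ`: the maximum number of pairwise `δ`-disjoint `s`-`d` journeys. -/
noncomputable def maxFlow (G : TVG V) (s d : V) (δ : ℕ) : ℕ :=
  sSup {m | HasDisjointJourneys G s d δ m}

/-- `MinCut_δ`: the minimum number of `δ`-removals rendering `d` unreachable from `s`. -/
noncomputable def minCut (G : TVG V) (s d : V) (δ : ℕ) : ℕ :=
  sInf {k | ∃ F : Finset ((V × V) × ℕ), F.card = k ∧ IsCutSet G s d δ F}

/-- `(n,δ)`-survivability of the pair `(s,d)`: after any `n` failures, each disabling
one edge for at most `δ` consecutive slots, `d` remains reachable from `s`. -/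
def Survivable (G : TVG V) (s d : V) (n δ : ℕ) : Prop :=
  ∀ F : Finset ((V × V) × ℕ × ℕ), F.card ≤ n → (∀ f ∈ F, f.2.2 ≤ δ) →
    ∃ J : G.Journey s d, ∀ c ∈ J.contacts, ∀ f ∈ F, ¬ Kills f.1 f.2.1 f.2.2 c

/-- `K_{e,t}` relative to a contact set `C`: the maximum number of contacts of `C`
on edge `e` contained in a window of `δ` consecutive slots containing `t`. -/
def windowCount {α : Type} [DecidableEq α] (δ : ℕ) (C : Finset (α × ℕ))
    (e : α) (t : ℕ) : ℕ :=
  (Finset.Icc (t + 1 - δ) t).sup fun w =>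
    (C.filter fun c => c.1 = e ∧ w ≤ c.2 ∧ c.2 < w + δ).card

/-- The weight `ω_{e,t} = 1 / K_{e,t}` of a contact. -/
noncomputable def contactWeight {α : Type} [DecidableEq α] (δ : ℕ)
    (C : Finset (α × ℕ)) (c : α × ℕ) : ℝ :=
  1 / (windowCount δ C c.1 c.2 : ℝ)

/-- `R` is a set of heads of `δ`-removals covering every contact of `C`:
each `(e,t) ∈ C` lies in some window `[r, r + δ - 1]` of a removal of edge `e`. -/
def IsCover {α : Type} (δ : ℕ) (C R : Finset (α × ℕ)) : Prop :=
  ∀ c ∈ C, ∃ r ∈ R, r.1 = c.1 ∧ r.2 ≤ c.2 ∧ c.2 < r.2 + δ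

/-- `|Cover_δ(C)|`: the minimum number of `δ`-removals needed to cover `C`. -/
noncomputable def coverNum {α : Type} (δ : ℕ) (C : Finset (α × ℕ)) : ℕ :=
  sInf {k | ∃ R : Finset (α × ℕ), R.card = k ∧ IsCover δ C R}

/-- The set of all contacts of a time-varying graph. -/
def TVG.contactSet (G : TVG V) : Finset ((V × V) × ℕ) :=
  (G.E ×ˢ Finset.Icc 1 G.T).filter fun c => G.ρ c.1 c.2 = true

/-- A set of contacts whose deletion disconnects `d` from `s`: every `s`-`d` journey
uses some contact of the set. -/
def Disconnecting (G : TVG V) (s d : V) (C : Finset ((V × V) × ℕ)) : Prop :=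
  ∀ J : G.Journey s d, ∃ c ∈ J.contacts, c ∈ C

/-! The weights are sandwiched: a δ-removal at `(e, w)` kills exactly the contacts in the window
`[w, w + δ)` of `e`, and each of them has `K ≥` the number `N` of contacts in that window, so the
killed contacts weigh at most `N · (1/N) = 1` together; hence `Σ_C ω ≤ |Cover_δ(C)|`. Conversely
`K ≤ δ`, so `|Cover_δ(C)| ≤ |C| ≤ δ · Σ_C ω`. Chaining the two bounds through the minimality of the
weight of `C_ALG` gives the factor `δ`. -/

section Sandwich

variable {α : Type} {δ : ℕ}

lemma isCover_self (hδ : 1 ≤ δ) (C : Finset (α × ℕ)) : IsCover δ C C :=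
  fun c hc => ⟨c, hc, rfl, le_rfl, by omega⟩

lemma coverNum_le_card (hδ : 1 ≤ δ) (C : Finset (α × ℕ)) : coverNum δ C ≤ C.card :=
  Nat.sInf_le ⟨C, rfl, isCover_self hδ C⟩

lemma exists_isCover_card_eq_coverNum (hδ : 1 ≤ δ) (C : Finset (α × ℕ)) :
    ∃ R, IsCover δ C R ∧ R.card = coverNum δ C := by
  obtain ⟨R, hcard, hR⟩ :=
    Nat.sInf_mem (s := {k | ∃ R : Finset (α × ℕ), R.card = k ∧ IsCover δ C R})
      ⟨_, C, rfl, isCover_self hδ C⟩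
  exact ⟨R, hR, hcard⟩

variable [DecidableEq α]

def windowContacts (δ : ℕ) (S : Finset (α × ℕ)) (e : α) (w : ℕ) : Finset (α × ℕ) :=
  S.filter fun c => c.1 = e ∧ w ≤ c.2 ∧ c.2 < w + δ

lemma mem_windowContacts {S : Finset (α × ℕ)} {e : α} {w : ℕ} {c : α × ℕ} :
    c ∈ windowContacts δ S e w ↔ c ∈ S ∧ c.1 = e ∧ w ≤ c.2 ∧ c.2 < w + δ :=
  Finset.mem_filter

lemma windowContacts_mono {S C : Finset (α × ℕ)} (hC : C ⊆ S) (e : α) (w : ℕ) :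
    windowContacts δ C e w ⊆ windowContacts δ S e w :=
  Finset.filter_subset_filter _ hC

lemma card_windowContacts_le (S : Finset (α × ℕ)) (e : α) (w : ℕ) :
    (windowContacts δ S e w).card ≤ δ := by
  calc (windowContacts δ S e w).card ≤ (Finset.Ico w (w + δ)).card := by
        refine Finset.card_le_card_of_injOn Prod.snd (fun c hc => ?_) fun c hc c' hc' h => ?_
        · have := mem_windowContacts.1 hc
          simp only [Finset.coe_Ico, Set.mem_Ico]
          omega
        · exact Prod.ext ((mem_windowContacts.1 hc).2.1.trans (mem_windowContacts.1 hc').2.1.symm) h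
    _ = δ := by simp

lemma card_windowContacts_le_windowCount (S : Finset (α × ℕ)) (e : α) {t w : ℕ}
    (hwt : w ≤ t) (htw : t < w + δ) :
    (windowContacts δ S e w).card ≤ windowCount δ S e t :=
  Finset.le_sup (f := fun w => (windowContacts δ S e w).card)
    (Finset.mem_Icc.2 ⟨by omega, hwt⟩)

lemma windowCount_le (S : Finset (α × ℕ)) (e : α) (t : ℕ) : windowCount δ S e t ≤ δ :=
  Finset.sup_le fun w _ => card_windowContacts_le S e w

lemma one_le_windowCount (hδ : 1 ≤ δ) {S : Finset (α × ℕ)} {c : α × ℕ} (hc : c ∈ S) :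
    1 ≤ windowCount δ S c.1 c.2 :=
  (Finset.card_pos.2 ⟨c, mem_windowContacts.2 ⟨hc, rfl, le_rfl, by omega⟩⟩).trans_le
    (card_windowContacts_le_windowCount S c.1 le_rfl (by omega))

lemma contactWeight_nonneg (S : Finset (α × ℕ)) (c : α × ℕ) : 0 ≤ contactWeight δ S c := by
  unfold contactWeight
  positivity

lemma one_div_le_contactWeight (hδ : 1 ≤ δ) {S : Finset (α × ℕ)} {c : α × ℕ} (hc : c ∈ S) :
    1 / (δ : ℝ) ≤ contactWeight δ S c :=
  one_div_le_one_div_of_le (by exact_mod_cast one_le_windowCount hδ hc)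
    (by exact_mod_cast windowCount_le S c.1 c.2)

lemma sum_contactWeight_windowContacts_le_one {S C : Finset (α × ℕ)} (hC : C ⊆ S)
    (e : α) (w : ℕ) : ∑ c ∈ windowContacts δ C e w, contactWeight δ S c ≤ 1 := by
  set N := (windowContacts δ S e w).card
  have hsub := windowContacts_mono (δ := δ) hC e w
  have hweight : ∀ c ∈ windowContacts δ C e w, contactWeight δ S c ≤ 1 / (N : ℝ) := by
    intro c hc
    have hcS := hsub hc
    obtain ⟨-, rfl, hwc, hcw⟩ := mem_windowContacts.1 hcS
    exact one_div_le_one_div_of_le (by exact_mod_cast Finset.card_pos.2 ⟨c, hcS⟩)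
      (by exact_mod_cast card_windowContacts_le_windowCount S c.1 hwc hcw)
  calc _ ≤ (windowContacts δ C e w).card • (1 / (N : ℝ)) :=
        Finset.sum_le_card_nsmul _ _ _ hweight
    _ = ((windowContacts δ C e w).card : ℝ) / N := by rw [nsmul_eq_mul, mul_one_div]
    _ ≤ 1 := div_le_one_of_le₀ (by exact_mod_cast Finset.card_le_card hsub) N.cast_nonneg

lemma sum_contactWeight_le_card_of_isCover {S C R : Finset (α × ℕ)} (hC : C ⊆ S)
    (hR : IsCover δ C R) : ∑ c ∈ C, contactWeight δ S c ≤ R.card :=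
  calc ∑ c ∈ C, contactWeight δ S c
      ≤ ∑ c ∈ C, ∑ r ∈ R.filter (fun r => c ∈ windowContacts δ C r.1 r.2),
          contactWeight δ S c := by
        refine Finset.sum_le_sum fun c hc => ?_
        obtain ⟨r, hr, hre, hrc⟩ := hR c hc
        exact Finset.single_le_sum (f := fun _ => contactWeight δ S c)
          (fun _ _ => contactWeight_nonneg S c)
          (Finset.mem_filter.2 ⟨hr, mem_windowContacts.2 ⟨hc, hre.symm, hrc⟩⟩)
    _ = ∑ r ∈ R, ∑ c ∈ windowContacts δ C r.1 r.2, contactWeight δ S c :=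
        Finset.sum_comm' fun c r => by
          simp only [Finset.mem_filter, mem_windowContacts]
          tauto
    _ ≤ ∑ _r ∈ R, (1 : ℝ) :=
        Finset.sum_le_sum fun r _ => sum_contactWeight_windowContacts_le_one hC r.1 r.2
    _ = R.card := by simp

theorem sum_contactWeight_le_coverNum (hδ : 1 ≤ δ) {S C : Finset (α × ℕ)} (hC : C ⊆ S) :
    ∑ c ∈ C, contactWeight δ S c ≤ coverNum δ C := by
  obtain ⟨R, hR, hcard⟩ := exists_isCover_card_eq_coverNum hδ C
  exact hcard ▸ sum_contactWeight_le_card_of_isCover hC hR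

theorem coverNum_le_mul_sum_contactWeight (hδ : 1 ≤ δ) {S C : Finset (α × ℕ)} (hC : C ⊆ S) :
    (coverNum δ C : ℝ) ≤ δ * ∑ c ∈ C, contactWeight δ S c := by
  have hδ' : (0 : ℝ) < δ := by exact_mod_cast hδ
  have hsum : C.card • (1 / (δ : ℝ)) ≤ ∑ c ∈ C, contactWeight δ S c :=
    Finset.card_nsmul_le_sum _ _ _ fun c hc => one_div_le_contactWeight hδ (hC hc)
  calc (coverNum δ C : ℝ) ≤ C.card := by exact_mod_cast coverNum_le_card hδ C
    _ = δ * (C.card • (1 / (δ : ℝ))) := by rw [nsmul_eq_mul]; field_simp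
    _ ≤ δ * ∑ c ∈ C, contactWeight δ S c := by gcongr

end Sandwich

theorem minWeight_delta_approx_general [DecidableEq V] (G : TVG V) (s d : V) (δ : ℕ)
    (hδ : 1 ≤ δ) (CALG COPT : Finset ((V × V) × ℕ))
    (hsubA : CALG ⊆ G.contactSet) (hsubO : COPT ⊆ G.contactSet)
    (hO : Disconnecting G s d COPT)
    (hmin : ∀ C' ⊆ G.contactSet, Disconnecting G s d C' →
      ∑ c ∈ CALG, contactWeight δ G.contactSet c ≤
        ∑ c ∈ C', contactWeight δ G.contactSet c) :
    coverNum δ CALG ≤ δ * coverNum δ COPT := by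
  have hδ₀ : (0 : ℝ) ≤ δ := δ.cast_nonneg
  have key : (coverNum δ CALG : ℝ) ≤ δ * coverNum δ COPT :=
    calc (coverNum δ CALG : ℝ)
        ≤ δ * ∑ c ∈ CALG, contactWeight δ G.contactSet c :=
          coverNum_le_mul_sum_contactWeight hδ hsubA
      _ ≤ δ * ∑ c ∈ COPT, contactWeight δ G.contactSet c :=
          mul_le_mul_of_nonneg_left (hmin COPT hsubO hO) hδ₀
      _ ≤ δ * coverNum δ COPT :=
          mul_le_mul_of_nonneg_left (sum_contactWeight_le_coverNum hδ hsubO) hδ₀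
  exact_mod_cast key

/-- The min-weight algorithm achieves a `δ`-approximation for `δ`-MINCUT: if
`C_ALG` is a minimum-weight disconnecting contact set (weights `ω = 1/K` computed
over all contacts of the graph) and `C*` is the contact set disabled by an optimal
solution, then `|Cover_δ(C_ALG)| ≤ δ · |Cover_δ(C*)|`. -/
theorem minWeight_delta_approx [DecidableEq V] (G : TVG V) (s d : V) (δ : ℕ)
    (hδ : 1 ≤ δ) (CALG COPT : Finset ((V × V) × ℕ))
    (hsubA : CALG ⊆ G.contactSet) (hsubO : COPT ⊆ G.contactSet)
    (hA : Disconnecting G s d CALG) (hO : Disconnecting G s d COPT)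
    (hmin : ∀ C' ⊆ G.contactSet, Disconnecting G s d C' →
      ∑ c ∈ CALG, contactWeight δ G.contactSet c ≤
        ∑ c ∈ C', contactWeight δ G.contactSet c) :
    coverNum δ CALG ≤ δ * coverNum δ COPT :=
  minWeight_delta_approx_general G s d δ hδ CALG COPT hsubA hsubO hO hmin
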